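/- Let X be a compact Priestley space, let S ⊆ X be a nonempty down-directed subset (any two elements of S have a common lower bound in S), let U ⊆ X be an open lower set, and let x₀ ∈ X be a greatest lower bound of S. If x₀ ∈ U, then S intersects U nontrivially, i.e. there exists s ∈ S with s ∈ U. -/
import Mathlib

lemma isClosed_Iic_of_priestley {X : Type*} [TopologicalSpace X] [Preorder X]
    [PriestleySpace X] (a : X) : IsClosed (Set.Iic a) := by
  rw [← isOpen_compl_iff, isOpen_iff_forall_mem_open]
  intro t ht
  obtain ⟨V, hV, hVup, htV, haV⟩ := exists_isClopen_upper_of_not_le (by simpa using ht)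
  exact ⟨V, fun v hv hva => haV (hVup hva hv), hV.isOpen, htV⟩

theorem stmt15 {X : Type*} [TopologicalSpace X] [PartialOrder X] [PriestleySpace X]
    [CompactSpace X]
    (S : Set X) (hS : S.Nonempty) (hdir : DirectedOn (· ≥ ·) S)
    (U : Set X) (hU : IsOpen U) (hUl : IsLowerSet U)
    (x₀ : X) (hglb : IsGLB S x₀) (hx₀ : x₀ ∈ U) :
    ∃ s ∈ S, s ∈ U := by
  by_contra h
  push_neg at h
  -- the filter generated by tails of the down-directed set S
  set F : Filter X := ⨅ s : S, Filter.principal {t ∈ S | t ≤ (s : X)} with hF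
  have hdirF : Directed (· ≥ ·) fun s : S => Filter.principal {t ∈ S | t ≤ (s : X)} := by
    rintro ⟨a, ha⟩ ⟨b, hb⟩
    obtain ⟨c, hc, hca, hcb⟩ := hdir a ha b hb
    exact ⟨⟨c, hc⟩, Filter.principal_mono.2 fun t ht => ⟨ht.1, ht.2.trans hca⟩,
      Filter.principal_mono.2 fun t ht => ⟨ht.1, ht.2.trans hcb⟩⟩
  haveI : Nonempty S := hS.to_subtype
  haveI : Nonempty X := ⟨hS.choose⟩
  haveI : F.NeBot := by
    refine Filter.iInf_neBot_of_directed hdirF fun s => ?_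
    exact Filter.principal_neBot_iff.2 ⟨s, s.2, le_refl _⟩
  obtain ⟨y, hy⟩ := exists_clusterPt_of_compactSpace F
  have hmem : ∀ A : Set X, IsClosed A → (∃ s : S, {t ∈ S | t ≤ (s : X)} ⊆ A) → y ∈ A := by
    rintro A hA ⟨s, hsub⟩
    have hFA : F ≤ Filter.principal A :=
      le_trans (iInf_le _ s) (Filter.principal_mono.2 hsub)
    have : ClusterPt y (Filter.principal A) := hy.mono hFA
    exact hA.closure_eq ▸ mem_closure_iff_clusterPt.2 this
  -- y is a lower bound of S
  have hlb : y ∈ lowerBounds S := fun s hs =>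
    hmem (Set.Iic s) (isClosed_Iic_of_priestley s) ⟨⟨s, hs⟩, fun t ht => ht.2⟩
  have hyU : y ∈ U := hUl (hglb.2 hlb) hx₀
  have hyUc : y ∈ Uᶜ :=
    hmem Uᶜ hU.isClosed_compl ⟨Classical.arbitrary S, fun t ht => h t ht.1⟩
  exact hyUc hyU
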